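/- arXiv:1801.06201 — 6 statements merged into one kernel-verified Lean document; each statement's English description precedes it below -/
import Mathlib

section
/- Let n, r be positive integers, X, Y ∈ M_n(ℂ) and v an n×r complex matrix, and suppose the triple (X, Y, v) is stable. If u ∈ M_n(ℂ) satisfies u*X = X*u, u*Y = Y*u and u*v = v, then u = 1. In particular, the stabilizer of a stable triple under simultaneous conjugation on (X, Y) and left multiplication on v is trivial; this implies that the unipotent upper-triangular group U acts freely on the stable locus. -/
/-!
Every word in `X` and `Y` commutes with `u`, so `u` fixes each vector `w(X, Y) vⱼ` because it fixes
the columns `vⱼ` of `v`. Hence `u` fixes their span, which by stability is the whole space.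
-/

open Matrix

/-- A triple `(X, Y, v)` is *stable* if the `ℂ`-linear span of all vectors
`(M₁ * ⋯ * M_k) *ᵥ (j-th column of v)`, with each `Mᵢ ∈ {X, Y}`,
is all of `Fin n → ℂ`. -/
def IsStable {n r : ℕ} (X Y : Matrix (Fin n) (Fin n) ℂ)
    (v : Matrix (Fin n) (Fin r) ℂ) : Prop :=
  Submodule.span ℂ {w : Fin n → ℂ |
    ∃ (L : List (Matrix (Fin n) (Fin n) ℂ)) (j : Fin r),
      (∀ M ∈ L, M = X ∨ M = Y) ∧ w = L.prod.mulVec fun i => v i j} = ⊤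

variable {m ι R : Type*} [Fintype m] [CommSemiring R]

theorem Matrix.mulVec_col_eq_self_of_mul_eq_self {u : Matrix m m R} {v : Matrix m ι R}
    (huv : u * v = v) (j : ι) : u *ᵥ v.col j = v.col j :=
  funext fun i => congr_fun (congr_fun huv i) j

theorem Matrix.span_words_mulVec_col_le_eqLocus [DecidableEq m] {X Y u : Matrix m m R}
    {v : Matrix m ι R} (huX : Commute u X) (huY : Commute u Y) (huv : u * v = v) :
    Submodule.span R {w | ∃ (L : List (Matrix m m R)) (j : ι),
        (∀ M ∈ L, M = X ∨ M = Y) ∧ w = L.prod *ᵥ fun i => v i j} ≤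
      LinearMap.eqLocus (mulVecLin u) LinearMap.id := by
  refine Submodule.span_le.mpr ?_
  rintro _ ⟨L, j, hL, rfl⟩
  have hu_prod : Commute u L.prod :=
    Commute.list_prod_right _ _ fun M hM => (hL M hM).elim (· ▸ huX) (· ▸ huY)
  change u *ᵥ (L.prod *ᵥ v.col j) = L.prod *ᵥ v.col j
  rw [mulVec_mulVec, hu_prod.eq, ← mulVec_mulVec, mulVec_col_eq_self_of_mul_eq_self huv]

theorem stabilizer_of_stable_triple_trivial_general
    {n r : ℕ}
    (X Y : Matrix (Fin n) (Fin n) ℂ) (v : Matrix (Fin n) (Fin r) ℂ)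
    (hstab : IsStable X Y v)
    (u : Matrix (Fin n) (Fin n) ℂ)
    (huX : u * X = X * u) (huY : u * Y = Y * u) (huv : u * v = v) :
    u = 1 := by
  have hfix : LinearMap.eqLocus (mulVecLin u) LinearMap.id = ⊤ :=
    top_le_iff.mp (hstab ▸ span_words_mulVec_col_le_eqLocus huX huY huv)
  refine ext_iff_mulVec.mpr fun w => ?_
  rw [one_mulVec]
  exact LinearMap.congr_fun (LinearMap.eqLocus_eq_top.mp hfix) w

/-- The stabilizer of a stable triple is trivial: any matrix `u` commuting with
`X` and `Y` and fixing the framing `v` is the identity. -/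
theorem stabilizer_of_stable_triple_trivial
    {n r : ℕ} (hn : 0 < n) (hr : 0 < r)
    (X Y : Matrix (Fin n) (Fin n) ℂ) (v : Matrix (Fin n) (Fin r) ℂ)
    (hstab : IsStable X Y v)
    (u : Matrix (Fin n) (Fin n) ℂ)
    (huX : u * X = X * u) (huY : u * Y = Y * u) (huv : u * v = v) :
    u = 1 :=
  stabilizer_of_stable_triple_trivial_general X Y v hstab u huX huY huv
end

section
/- Let n, r be positive integers, X, Y ∈ M_n(ℂ) and v an n×r complex matrix, and suppose the triple (X, Y, v) is stable. If Z ∈ M_n(ℂ) satisfies [X, Z] = 0, [Y, Z] = 0 and Z*v = 0, then Z = 0. (In particular no nonzero strictly upper-triangular matrix Z can satisfy these conditions, which is the infinitesimal form of the freeness of the U-action on the stable locus.) -/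
open Matrix

/-!
Since `Z` commutes with `X` and `Y`, it commutes with every word in them, so
`Z (M₁ ⋯ M_k v_j) = M₁ ⋯ M_k (Z v_j) = 0`. Thus `Z` kills a spanning set of `ℂⁿ`, hence is zero.
-/

namespace Matrix

variable {R m n o : Type*} [CommRing R] [Fintype n] [DecidableEq n]

theorem eq_zero_of_mulVec_eq_zero_of_span_eq_top {Z : Matrix m n R} {S : Set (n → R)}
    (hS : Submodule.span R S = ⊤) (hZ : ∀ w ∈ S, Z *ᵥ w = 0) : Z = 0 := by
  have hker : LinearMap.ker (Matrix.toLin' Z) = ⊤ :=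
    top_le_iff.mp (hS ▸ Submodule.span_le.mpr hZ)
  exact Matrix.toLin'.map_eq_zero_iff.mp (LinearMap.ker_eq_top.mp hker)

omit [DecidableEq n] in
theorem mulVec_col_eq_zero_of_mul_eq_zero {Z : Matrix m n R} {v : Matrix n o R}
    (hZv : Z * v = 0) (j : o) : Z *ᵥ (fun i => v i j) = 0 :=
  funext fun i => congrFun (congrFun hZv i) j

end Matrix

theorem inf_stabilizer_of_stable_triple_trivial_general
    {n r : ℕ}
    (X Y : Matrix (Fin n) (Fin n) ℂ) (v : Matrix (Fin n) (Fin r) ℂ)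
    (hstab : IsStable X Y v)
    (Z : Matrix (Fin n) (Fin n) ℂ)
    (hZX : X * Z - Z * X = 0) (hZY : Y * Z - Z * Y = 0) (hZv : Z * v = 0) :
    Z = 0 := by
  have hX : Commute Z X := (sub_eq_zero.mp hZX).symm
  have hY : Commute Z Y := (sub_eq_zero.mp hZY).symm
  refine eq_zero_of_mulVec_eq_zero_of_span_eq_top hstab ?_
  rintro _ ⟨L, j, hL, rfl⟩
  have hword : Commute Z L.prod :=
    Commute.list_prod_right _ _ fun M hM => (hL M hM).elim (· ▸ hX) (· ▸ hY)
  rw [mulVec_mulVec, hword.eq, ← mulVec_mulVec, mulVec_col_eq_zero_of_mul_eq_zero hZv,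
    mulVec_zero]

/-- The infinitesimal stabilizer of a stable triple is trivial: any matrix `Z`
commuting with `X` and `Y` and killing the framing `v` is zero. -/
theorem inf_stabilizer_of_stable_triple_trivial
    {n r : ℕ} (hn : 0 < n) (hr : 0 < r)
    (X Y : Matrix (Fin n) (Fin n) ℂ) (v : Matrix (Fin n) (Fin r) ℂ)
    (hstab : IsStable X Y v)
    (Z : Matrix (Fin n) (Fin n) ℂ)
    (hZX : X * Z - Z * X = 0) (hZY : Y * Z - Z * Y = 0) (hZv : Z * v = 0) :
    Z = 0 :=
  inf_stabilizer_of_stable_triple_trivial_general X Y v hstab Z hZX hZY hZv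
end

section
/- Let n, r be positive integers, X, Y ∈ M_n(ℂ), v an n×r complex matrix, and k : Fin n → ℤ a weight function. Assume: (i) X i j = 0 and Y i j = 0 whenever k i < k j; (ii) v i j = 0 for all j whenever k i < 0; and (iii) the triple (X, Y, v) is stable. Then k j ≥ 0 for every j. (This is the GIT-stability statement: no one-parameter subgroup η(t) = diag(t^{k_1},…,t^{k_n}) with Σ k_i < 0 admits a limit of (X, Y, v) as t → 0, so every point of the stable locus is GIT stable for the determinant character.) -/
open Matrix

/-!
Conditions (i) say that `X` and `Y` are block triangular for the weights `k` read in the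
dual order, so every word in `X, Y` is too, and such matrices preserve the subspace of
vectors vanishing on the coordinates of negative weight. By (ii) the columns of `v` lie in
that subspace, hence so does the span in the definition of stability. Stability makes the
span everything, so no coordinate can have negative weight.
-/

namespace Matrix

variable {m α R : Type*} [Fintype m] [LinearOrder α] [Semiring R]

theorem BlockTriangular.mulVec_mem_pi_bot {M : Matrix m m R} {b : m → α}
    (hM : M.BlockTriangular b) (c : α) {w : m → R}
    (hw : w ∈ Submodule.pi {i | c < b i} fun _ => (⊥ : Submodule R R)) :
    M *ᵥ w ∈ Submodule.pi {i | c < b i} fun _ => (⊥ : Submodule R R) := by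
  simp only [Submodule.mem_pi, Set.mem_ofPred_eq, Submodule.mem_bot] at hw ⊢
  intro i hi
  refine Finset.sum_eq_zero fun j _ => ?_
  rcases lt_or_ge c (b j) with hj | hj
  · simp [hw j hj]
  · simp [hM (hj.trans_lt hi)]

end Matrix

open OrderDual in
theorem git_stable_of_stable_general
    {n r : ℕ}
    (X Y : Matrix (Fin n) (Fin n) ℂ) (v : Matrix (Fin n) (Fin r) ℂ)
    (k : Fin n → ℤ)
    (hXY : ∀ i j : Fin n, k i < k j → X i j = 0 ∧ Y i j = 0)
    (hv : ∀ i : Fin n, k i < 0 → ∀ j : Fin r, v i j = 0)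
    (hstab : IsStable X Y v) :
    ∀ j : Fin n, 0 ≤ k j := by
  set W : Submodule ℂ (Fin n → ℂ) :=
    Submodule.pi {i | toDual 0 < toDual (k i)} fun _ => (⊥ : Submodule ℂ ℂ)
  have hwords : ∀ L : List (Matrix (Fin n) (Fin n) ℂ), (∀ M ∈ L, M = X ∨ M = Y) →
      L.prod ∈ blockTriangularSubsemiring ℂ (toDual ∘ k) := fun L hL =>
    list_prod_mem fun M hM => by
      rcases hL M hM with rfl | rfl
      exacts [fun i j h => (hXY i j h).1, fun i j h => (hXY i j h).2]
  unfold IsStable at hstab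
  have hspan : ⊤ ≤ W := by
    rw [← hstab, Submodule.span_le]
    rintro w ⟨L, j, hL, rfl⟩
    exact (hwords L hL).mulVec_mem_pi_bot (toDual 0)
      (Submodule.mem_pi.mpr fun i hi => (Submodule.mem_bot ℂ).mpr (hv i hi j))
  intro j
  by_contra! hj
  have hsingle := Submodule.mem_pi.mp (hspan (Submodule.mem_top (x := Pi.single j 1))) j hj
  simp at hsingle

/-- GIT stability: if a one-parameter subgroup `η(t) = diag(t^{k_1},…,t^{k_n})`
admits a limit of a stable triple `(X, Y, v)` as `t → 0` (conditions (i), (ii)),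
then all its weights are nonnegative. -/
theorem git_stable_of_stable
    {n r : ℕ} (hn : 0 < n) (hr : 0 < r)
    (X Y : Matrix (Fin n) (Fin n) ℂ) (v : Matrix (Fin n) (Fin r) ℂ)
    (k : Fin n → ℤ)
    (hXY : ∀ i j : Fin n, k i < k j → X i j = 0 ∧ Y i j = 0)
    (hv : ∀ i : Fin n, k i < 0 → ∀ j : Fin r, v i j = 0)
    (hstab : IsStable X Y v) :
    ∀ j : Fin n, 0 ≤ k j :=
  git_stable_of_stable_general X Y v k hXY hv hstab
end

section
/- Let n, r be positive integers. The set of stable triples (X, Y, v) is an open subset of M_n(ℂ) × M_n(ℂ) × M_{n×r}(ℂ) in the standard (product/Euclidean) topology. -/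
open Matrix

/-!
Stability of `(X, Y, v)` says that the vectors `w(X, Y) *ᵥ vⱼ`, for words `w` in two letters and
columns `vⱼ`, span `ℂⁿ`. A spanning family contains a basis; that basis is a finite subfamily whose
members depend continuously on the triple, and linear independence of finitely many vectors is an
open condition, so the subfamily still spans at every nearby triple.
-/

theorem isOpen_setOf_span_range_eq_top {𝕜 E T ι : Type*} [NontriviallyNormedField 𝕜]
    [CompleteSpace 𝕜] [NormedAddCommGroup E] [NormedSpace 𝕜 E] [FiniteDimensional 𝕜 E]
    [TopologicalSpace T] {v : ι → T → E} (hv : ∀ i, Continuous (v i)) :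
    IsOpen {t | Submodule.span 𝕜 (Set.range fun i => v i t) = ⊤} := by
  refine isOpen_iff_mem_nhds.2 fun t ht => ?_
  obtain ⟨κ, a, -, hspan, hli⟩ := exists_linearIndependent' 𝕜 fun i => v i t
  rw [Set.mem_ofPred_eq.mp ht] at hspan
  let B := Module.Basis.mk hli hspan.ge
  have : Fintype κ := FiniteDimensional.fintypeBasisIndex B
  have hcont : Continuous fun t (k : κ) => v (a k) t := continuous_pi fun k => hv (a k)
  filter_upwards [hcont.continuousAt.eventually hli.eventually] with t' hli'
  refine eq_top_mono (Submodule.span_mono ?_) (hli'.span_eq_top_of_card_eq_finrank'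
    (Module.finrank_eq_card_basis B).symm)
  exact Set.range_comp_subset_range a fun i => v i t'

theorem List.exists_map_cond_eq {α : Type*} {x y : α} {L : List α}
    (hL : ∀ z ∈ L, z = x ∨ z = y) : ∃ w : List Bool, w.map (cond · x y) = L := by
  rw [← Set.mem_range, Set.range_list_map]
  intro z hz
  rcases hL z hz with rfl | rfl
  exacts [⟨true, rfl⟩, ⟨false, rfl⟩]

section

variable {n r : ℕ}

def wordVector (X Y : Matrix (Fin n) (Fin n) ℂ) (v : Matrix (Fin n) (Fin r) ℂ)
    (w : List Bool × Fin r) : Fin n → ℂ :=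
  (w.1.map (cond · X Y)).prod.mulVec fun i => v i w.2

theorem isStable_iff_span_range_wordVector (X Y : Matrix (Fin n) (Fin n) ℂ)
    (v : Matrix (Fin n) (Fin r) ℂ) :
    IsStable X Y v ↔ Submodule.span ℂ (Set.range (wordVector X Y v)) = ⊤ := by
  rw [IsStable]
  congr! 3
  ext u
  constructor
  · rintro ⟨L, j, hL, rfl⟩
    obtain ⟨w, rfl⟩ := List.exists_map_cond_eq hL
    exact ⟨(w, j), rfl⟩
  · rintro ⟨⟨w, j⟩, rfl⟩
    refine ⟨_, j, fun M hM => ?_, rfl⟩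
    obtain ⟨b, -, rfl⟩ := List.mem_map.mp hM
    cases b <;> simp

theorem continuous_wordVector (w : List Bool × Fin r) :
    Continuous fun p : Matrix (Fin n) (Fin n) ℂ × Matrix (Fin n) (Fin n) ℂ ×
      Matrix (Fin n) (Fin r) ℂ => wordVector p.1 p.2.1 p.2.2 w := by
  refine .matrix_mulVec (continuous_list_prod w.1 fun b _ => ?_) (by fun_prop)
  cases b <;> simp only [cond_true, cond_false] <;> fun_prop

end

theorem isOpen_stable_locus_general (n r : ℕ) :
    IsOpen {p : Matrix (Fin n) (Fin n) ℂ × Matrix (Fin n) (Fin n) ℂ ×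
        Matrix (Fin n) (Fin r) ℂ | IsStable p.1 p.2.1 p.2.2} := by
  simp only [isStable_iff_span_range_wordVector]
  exact isOpen_setOf_span_range_eq_top continuous_wordVector

/-- The stable locus is open in the product (Euclidean) topology. -/
theorem isOpen_stable_locus (n r : ℕ) (hn : 0 < n) (hr : 0 < r) :
    IsOpen {p : Matrix (Fin n) (Fin n) ℂ × Matrix (Fin n) (Fin n) ℂ ×
        Matrix (Fin n) (Fin r) ℂ | IsStable p.1 p.2.1 p.2.2} :=
  isOpen_stable_locus_general n r
end

section
/- Let n ≥ 2 and let Br^aff_n be the affine braid group on n strands, presented by generators σ_1, …, σ_{n−1}, Δ and relations σ_i σ_{i+1} σ_i = σ_{i+1} σ_i σ_{i+1} (1 ≤ i ≤ n−2), σ_i σ_j = σ_j σ_i for |i − j| > 1, σ_{n−1} Δ σ_{n−1} Δ = Δ σ_{n−1} Δ σ_{n−1}, and σ_i Δ = Δ σ_i for i < n−1. Define the Bernstein–Lusztig elements Δ_n := Δ and Δ_i := σ_i σ_{i+1} ⋯ σ_{n−1} Δ σ_{n−1} ⋯ σ_{i+1} σ_i for 1 ≤ i ≤ n−1. Then the elements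 Δ_1, …, Δ_n pairwise commute: Δ_i Δ_j = Δ_j Δ_i for all i, j. -/
/-!
Write `Δ_i = σ_i Δ_{i+1} σ_i`. Descending induction on `l` shows that `σ_k` commutes with `Δ_l`
whenever `k + 1 < l`, using the far commutations and `σ_k Δ = Δ σ_k`. A second descending
induction shows that `σ_{j-1}` and `Δ_j` satisfy the braid relation of length four: for `j = n`
this is the affine relation, and it passes from `(σ_j, Δ_{j+1})` to `(σ_{j-1}, σ_j Δ_{j+1} σ_j)`
through the braid relation between `σ_{j-1}` and `σ_j`. That relation says precisely that
`Δ_{j-1} = σ_{j-1} Δ_j σ_{j-1}` commutes with `Δ_j`, and for `i + 1 < j` the element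
`Δ_i = σ_i Δ_{i+1} σ_i` commutes with `Δ_j` by induction on `j - i`.

Only these relations enter, so everything holds for elements `s 0, …, s (m-1), d` of any group
satisfying them; the affine braid group is the case `s k = σ_{k+1}`, `m = n - 1`.
-/

open FreeGroup

/-- The defining relations of the affine braid group on `n` strands, on the
generators `some i` (the `σ_{i+1}`, `i : Fin (n-1)`, 0-indexed) and
`none` (the element `Δ`). -/
def affBraidRels (n : ℕ) : Set (FreeGroup (Option (Fin (n - 1)))) :=
  {w | ∃ i j : Fin (n - 1), (i : ℕ) + 1 = (j : ℕ) ∧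
    w = of (some i) * of (some j) * of (some i) *
      (of (some j) * of (some i) * of (some j))⁻¹} ∪
  {w | ∃ i j : Fin (n - 1), (i : ℕ) + 1 < (j : ℕ) ∧
    w = of (some i) * of (some j) * (of (some j) * of (some i))⁻¹} ∪
  {w | ∃ i : Fin (n - 1), (i : ℕ) = n - 2 ∧
    w = of (some i) * of none * of (some i) * of none *
      (of none * of (some i) * of none * of (some i))⁻¹} ∪
  {w | ∃ i : Fin (n - 1), (i : ℕ) + 1 < n - 1 ∧
    w = of (some i) * of none * (of none * of (some i))⁻¹}

/-- The affine braid group on `n` strands. -/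
def AffBraidGroup (n : ℕ) := PresentedGroup (affBraidRels n)

instance (n : ℕ) : Group (AffBraidGroup n) := by
  unfold AffBraidGroup; infer_instance

/-- The generator `σ_k` (1-indexed, `1 ≤ k ≤ n-1`), or `1` if out of range. -/
noncomputable def affSigma (n : ℕ) (k : ℕ) : AffBraidGroup n :=
  if h : k - 1 < n - 1 then PresentedGroup.of (some ⟨k - 1, h⟩) else 1

/-- The generator `Δ`. -/
noncomputable def affDelta (n : ℕ) : AffBraidGroup n :=
  PresentedGroup.of none

/-- The word `σ_i σ_{i+1} ⋯ σ_{n-1}` (1-indexed). -/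
noncomputable def affSigmaWord (n : ℕ) (i : ℕ) : List (AffBraidGroup n) :=
  (((List.range (n - 1)).drop (i - 1)).map fun k => affSigma n (k + 1))

/-- The Bernstein–Lusztig element
`Δ_i = σ_i σ_{i+1} ⋯ σ_{n-1} Δ σ_{n-1} ⋯ σ_{i+1} σ_i` (with `Δ_n = Δ`). -/
noncomputable def BL (n : ℕ) (i : ℕ) : AffBraidGroup n :=
  (affSigmaWord n i).prod * affDelta n * (affSigmaWord n i).reverse.prod

section BernsteinLusztig

variable {G : Type*} [Group G]

theorem braid4_conj_of_braid3 {a b d : G} (hab : a * b * a = b * a * b) (had : Commute a d)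
    (hbd : b * d * b * d = d * b * d * b) :
    a * (b * d * b) * a * (b * d * b) = b * d * b * a * (b * d * b) * a :=
  calc a * (b * d * b) * a * (b * d * b)
      = a * b * d * (a * b * a) * d * b := by rw [hab]; group
    _ = a * b * (a * d) * b * a * d * b := by rw [had.eq]; group
    _ = (b * a * b) * d * b * a * d * b := by rw [← hab]; group
    _ = b * a * b * d * b * (d * a) * b := by rw [← had.eq]; group
    _ = b * a * (d * b * d * b) * a * b := by rw [← hbd]; group
    _ = b * (d * a) * b * d * b * a * b := by rw [← had.eq]; group
    _ = b * d * a * b * d * (a * b * a) := by rw [hab]; group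
    _ = b * d * a * b * (a * d) * b * a := by rw [had.eq]; group
    _ = b * d * (b * a * b) * d * b * a := by rw [← hab]; group
    _ = b * d * b * a * (b * d * b) * a := by group

/-- `bernsteinLusztig s d m k = s k * s (k+1) * ⋯ * s (m-1) * d * s (m-1) * ⋯ * s k`,
which is `d` for `m ≤ k`. -/
def bernsteinLusztig (s : ℕ → G) (d : G) (m k : ℕ) : G :=
  (((List.range m).drop k).map s).prod * d * (((List.range m).drop k).map s).reverse.prod

structure IsAffineBraidFamily (s : ℕ → G) (d : G) (m : ℕ) : Prop where
  braid : ∀ k, k + 1 < m → s k * s (k + 1) * s k = s (k + 1) * s k * s (k + 1)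
  commute : ∀ k l, k + 1 < l → l < m → Commute (s k) (s l)
  braid_last : ∀ k, k + 1 = m → s k * d * s k * d = d * s k * d * s k
  commute_last : ∀ k, k + 1 < m → Commute (s k) d

variable {s : ℕ → G} {d : G} {m : ℕ}

theorem bernsteinLusztig_of_le {k : ℕ} (h : m ≤ k) : bernsteinLusztig s d m k = d := by
  simp [bernsteinLusztig, List.drop_eq_nil_of_le (by simpa using h : (List.range m).length ≤ k)]

theorem bernsteinLusztig_of_lt {k : ℕ} (h : k < m) :
    bernsteinLusztig s d m k = s k * bernsteinLusztig s d m (k + 1) * s k := by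
  simp [bernsteinLusztig, List.drop_eq_getElem_cons (by simpa using h : k < (List.range m).length),
    mul_assoc]

theorem bernsteinLusztig_min (k : ℕ) :
    bernsteinLusztig s d m (min k m) = bernsteinLusztig s d m k := by
  rcases le_total k m with h | h
  · rw [min_eq_left h]
  · rw [min_eq_right h, bernsteinLusztig_of_le le_rfl, bernsteinLusztig_of_le h]

namespace IsAffineBraidFamily

theorem commute_bernsteinLusztig_of_lt (h : IsAffineBraidFamily s d m) {k l : ℕ}
    (hkl : k + 1 < l) (hl : l ≤ m) :
    Commute (s k) (bernsteinLusztig s d m l) := by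
  induction hl using Nat.decreasingInduction with
  | self => rw [bernsteinLusztig_of_le le_rfl]; exact h.commute_last k hkl
  | of_succ l hl ih =>
    have hs := h.commute k l hkl hl
    rw [bernsteinLusztig_of_lt hl]
    exact (hs.mul_right (ih (by omega))).mul_right hs

theorem braid_bernsteinLusztig (h : IsAffineBraidFamily s d m) {k : ℕ} (hk : k + 1 ≤ m) :
    s k * bernsteinLusztig s d m (k + 1) * s k * bernsteinLusztig s d m (k + 1) =
      bernsteinLusztig s d m (k + 1) * s k * bernsteinLusztig s d m (k + 1) * s k := by
  generalize hl : k + 1 = l at hk ⊢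
  induction hk using Nat.decreasingInduction generalizing k with
  | self => rw [bernsteinLusztig_of_le le_rfl]; exact h.braid_last k hl
  | of_succ l hl' ih =>
    subst hl
    rw [bernsteinLusztig_of_lt hl']
    exact braid4_conj_of_braid3 (h.braid k hl') (h.commute_bernsteinLusztig_of_lt (by omega) hl')
      (ih rfl)

theorem commute_bernsteinLusztig_of_le (h : IsAffineBraidFamily s d m) {k l : ℕ}
    (hkl : k ≤ l) (hl : l ≤ m) :
    Commute (bernsteinLusztig s d m k) (bernsteinLusztig s d m l) := by
  induction hkl using Nat.decreasingInduction with
  | self => exact Commute.refl _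
  | of_succ k hk ih =>
    rw [bernsteinLusztig_of_lt (hk.trans_le hl)]
    rcases (by omega : k + 1 = l ∨ k + 1 < l) with rfl | hk'
    · simpa only [commute_iff_eq, mul_assoc] using h.braid_bernsteinLusztig (hk.trans_le hl)
    · have hs := h.commute_bernsteinLusztig_of_lt hk' hl
      exact (hs.mul_left ih).mul_left hs

theorem commute_bernsteinLusztig (h : IsAffineBraidFamily s d m) (k l : ℕ) :
    Commute (bernsteinLusztig s d m k) (bernsteinLusztig s d m l) := by
  rw [← bernsteinLusztig_min k, ← bernsteinLusztig_min l]
  rcases le_total (min k m) (min l m) with hkl | hlk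
  · exact h.commute_bernsteinLusztig_of_le hkl (min_le_right l m)
  · exact (h.commute_bernsteinLusztig_of_le hlk (min_le_right k m)).symm

end IsAffineBraidFamily

end BernsteinLusztig

theorem affSigma_succ {n k : ℕ} (hk : k < n - 1) :
    affSigma n (k + 1) = PresentedGroup.of (some ⟨k, hk⟩) :=
  dif_pos hk

theorem isAffineBraidFamily_affSigma (n : ℕ) :
    IsAffineBraidFamily (fun k => affSigma n (k + 1)) (affDelta n) (n - 1) where
  braid k hk := by
    rw [affSigma_succ (by omega), affSigma_succ hk]
    exact PresentedGroup.mk_eq_mk_of_mul_inv_mem (.inl (.inl (.inl ⟨_, _, rfl, rfl⟩)))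
  commute k l hkl hl := by
    rw [affSigma_succ (by omega), affSigma_succ hl]
    exact PresentedGroup.mk_eq_mk_of_mul_inv_mem (.inl (.inl (.inr ⟨_, _, hkl, rfl⟩)))
  braid_last k hk := by
    rw [affSigma_succ (by omega)]
    exact PresentedGroup.mk_eq_mk_of_mul_inv_mem (.inl (.inr ⟨_, by simp; omega, rfl⟩))
  commute_last k hk := by
    rw [affSigma_succ (by omega)]
    exact PresentedGroup.mk_eq_mk_of_mul_inv_mem (.inr ⟨_, hk, rfl⟩)

theorem BL_commute_general (n : ℕ) (i j : ℕ) :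
    BL n i * BL n j = BL n j * BL n i :=
  ((isAffineBraidFamily_affSigma n).commute_bernsteinLusztig (i - 1) (j - 1)).eq

/-- The Bernstein–Lusztig elements `Δ_1, …, Δ_n` pairwise commute. -/
theorem BL_commute (n : ℕ) (hn : 2 ≤ n) (i j : ℕ)
    (hi : 1 ≤ i) (hi' : i ≤ n) (hj : 1 ≤ j) (hj' : j ≤ n) :
    BL n i * BL n j = BL n j * BL n i :=
  BL_commute_general n i j
end

section
/- Let n ≥ 2 and let Br_n be the braid group on n strands, presented by generators σ_1, …, σ_{n−1} and relations σ_i σ_{i+1} σ_i = σ_{i+1} σ_i σ_{i+1} (1 ≤ i ≤ n−2) and σ_i σ_j = σ_j σ_i for |i − j| > 1. Define the Jucys–Murphy elements δ_i := σ_i σ_{i+1} ⋯ σ_{n−2} σ_{n−1}^2 σ_{n−2} ⋯ σ_{i+1} σ_i for 1 ≤ i ≤ n−1. Then the elements δ_1, …, δ_{n−1} pairwise commute: δ_i δ_j = δ_j δ_i for all i, j. -/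
open FreeGroup

/-- The braid relations on the generators `σ_{i+1}`, `i : Fin (n-1)` (0-indexed). -/
def braidRels (n : ℕ) : Set (FreeGroup (Fin (n - 1))) :=
  {w | ∃ i j : Fin (n - 1), (i : ℕ) + 1 = (j : ℕ) ∧
    w = of i * of j * of i * (of j * of i * of j)⁻¹} ∪
  {w | ∃ i j : Fin (n - 1), (i : ℕ) + 1 < (j : ℕ) ∧
    w = of i * of j * (of j * of i)⁻¹}

/-- The braid group on `n` strands. -/
def BraidGroup (n : ℕ) := PresentedGroup (braidRels n)

instance (n : ℕ) : Group (BraidGroup n) := by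
  unfold BraidGroup; infer_instance

/-- The generator `σ_k` (1-indexed, `1 ≤ k ≤ n-1`), or `1` if out of range. -/
noncomputable def braidSigma (n : ℕ) (k : ℕ) : BraidGroup n :=
  if h : k - 1 < n - 1 then PresentedGroup.of ⟨k - 1, h⟩ else 1

/-- The word `σ_i σ_{i+1} ⋯ σ_{n-1}` (1-indexed). -/
noncomputable def braidSigmaWord (n : ℕ) (i : ℕ) : List (BraidGroup n) :=
  (((List.range (n - 1)).drop (i - 1)).map fun k => braidSigma n (k + 1))

/-- The Jucys–Murphy element
`δ_i = σ_i σ_{i+1} ⋯ σ_{n-2} σ_{n-1}² σ_{n-2} ⋯ σ_{i+1} σ_i`. -/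
noncomputable def JM (n : ℕ) (i : ℕ) : BraidGroup n :=
  (braidSigmaWord n i).prod * (braidSigmaWord n i).reverse.prod

/-
The recursion `δ_i = σ_i δ_{i+1} σ_i` reduces everything to one claim: `σ_k` commutes with `δ_i`
whenever `k > i`. For `k ≥ i + 2` this follows from far commutativity and downward induction on `i`;
for `k = i + 1` it is a consequence of the braid relation `σ_i σ_{i+1} σ_i = σ_{i+1} σ_i σ_{i+1}`
together with `σ_i` commuting with `δ_{i+2}`. Since `δ_j` is a word in the `σ_k` with `k ≥ j`,
it then commutes with `δ_i` for `i < j`.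
-/

theorem commute_mul_mul_mul_of_braid {M : Type*} [Monoid M] {a b c : M}
    (hab : a * b * a = b * a * b) (hac : Commute a c) :
    Commute b (a * (b * c * b) * a) := by
  calc b * (a * (b * c * b) * a) = (b * a * b) * c * (b * a) := by simp only [mul_assoc]
    _ = a * b * (a * c) * (b * a) := by rw [← hab]; simp only [mul_assoc]
    _ = a * b * (c * a) * (b * a) := by rw [hac.eq]
    _ = a * b * c * (a * b * a) := by simp only [mul_assoc]
    _ = a * (b * c * b) * a * b := by rw [hab]; simp only [mul_assoc]

namespace BraidGroup

variable {n : ℕ}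

theorem mk_eq_one_of_mem_braidRels {r : FreeGroup (Fin (n - 1))} (h : r ∈ braidRels n) :
    (PresentedGroup.mk (braidRels n) r : BraidGroup n) = 1 :=
  (QuotientGroup.eq_one_iff r).mpr (Subgroup.subset_normalClosure h)

theorem of_mul_of_mul_of {i j : Fin (n - 1)} (h : (i : ℕ) + 1 = j) :
    (PresentedGroup.of i : BraidGroup n) * PresentedGroup.of j * PresentedGroup.of i
      = PresentedGroup.of j * PresentedGroup.of i * PresentedGroup.of j := by
  have h1 := mk_eq_one_of_mem_braidRels (n := n) (Or.inl ⟨i, j, h, rfl⟩)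
  simp only [_root_.map_mul, _root_.map_inv] at h1
  exact mul_inv_eq_one.mp h1

theorem commute_of_of {i j : Fin (n - 1)} (h : (i : ℕ) + 1 < j) :
    Commute (PresentedGroup.of i : BraidGroup n) (PresentedGroup.of j) := by
  have h1 := mk_eq_one_of_mem_braidRels (n := n) (Or.inr ⟨i, j, h, rfl⟩)
  simp only [_root_.map_mul, _root_.map_inv] at h1
  exact mul_inv_eq_one.mp h1

end BraidGroup

open BraidGroup

section Generators

variable {n k l : ℕ}

theorem braidSigma_of_lt (h : k - 1 < n - 1) : braidSigma n k = PresentedGroup.of ⟨k - 1, h⟩ :=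
  dif_pos h

theorem braidSigma_of_le (h : n ≤ k) : braidSigma n k = 1 :=
  dif_neg (by omega)

theorem braidSigma_mul_braidSigma_mul_braidSigma (hk : 1 ≤ k) (hkn : k + 1 ≤ n - 1) :
    braidSigma n k * braidSigma n (k + 1) * braidSigma n k
      = braidSigma n (k + 1) * braidSigma n k * braidSigma n (k + 1) := by
  rw [braidSigma_of_lt (by omega), braidSigma_of_lt (by omega)]
  exact of_mul_of_mul_of (by simp only; omega)

theorem commute_braidSigma (hk : 1 ≤ k) (hkl : k + 2 ≤ l) :
    Commute (braidSigma n k) (braidSigma n l) := by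
  by_cases hl : l - 1 < n - 1
  · rw [braidSigma_of_lt (by omega), braidSigma_of_lt hl]
    exact commute_of_of (by simp only; omega)
  · rw [braidSigma_of_le (k := l) (by omega)]
    exact Commute.one_right _

end Generators

section JucysMurphy

variable {n i : ℕ}

theorem braidSigmaWord_of_le (h : n ≤ i) : braidSigmaWord n i = [] := by
  rw [braidSigmaWord, List.drop_eq_nil_of_le (by simp only [List.length_range]; omega),
    List.map_nil]

theorem braidSigmaWord_eq_cons (hi : 1 ≤ i) (hin : i ≤ n - 1) :
    braidSigmaWord n i = braidSigma n i :: braidSigmaWord n (i + 1) := by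
  rw [braidSigmaWord, braidSigmaWord,
    List.drop_eq_getElem_cons (by simp only [List.length_range]; omega), List.map_cons,
    List.getElem_range, Nat.sub_add_cancel hi, Nat.add_sub_cancel]

theorem JM_of_le (h : n ≤ i) : JM n i = 1 := by
  rw [JM, braidSigmaWord_of_le h, List.reverse_nil, List.prod_nil, mul_one]

theorem JM_eq_mul_mul (hi : 1 ≤ i) (hin : i ≤ n - 1) :
    JM n i = braidSigma n i * JM n (i + 1) * braidSigma n i := by
  rw [JM, JM, braidSigmaWord_eq_cons hi hin, List.prod_cons, List.reverse_cons,
    List.prod_append, List.prod_singleton]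
  simp only [mul_assoc]

theorem JM_max_one (n i : ℕ) : JM n (max i 1) = JM n i := by
  simp only [JM, braidSigmaWord, show max i 1 - 1 = i - 1 by omega]

theorem commute_JM_of_commute_braidSigma {x : BraidGroup n}
    (h : ∀ m, i ≤ m → Commute x (braidSigma n m)) : Commute x (JM n i) := by
  have hword : ∀ y ∈ braidSigmaWord n i, Commute x y := by
    intro y hy
    obtain ⟨m, hm, rfl⟩ := List.mem_map.mp hy
    obtain ⟨t, ht, rfl⟩ := List.mem_iff_getElem.mp hm
    rw [List.getElem_drop, List.getElem_range]
    exact h _ (by omega)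
  exact (Commute.list_prod_right _ _ hword).mul_right
    (Commute.list_prod_right _ _ fun y hy => hword y (List.mem_reverse.mp hy))

theorem commute_braidSigma_JM {i k : ℕ} (hi : 1 ≤ i) (hik : i < k) :
    Commute (braidSigma n k) (JM n i) := by
  by_cases hin : n ≤ i
  · rw [JM_of_le hin]
    exact Commute.one_right _
  rw [JM_eq_mul_mul hi (by omega)]
  rcases (by omega : k = i + 1 ∨ i + 2 ≤ k) with rfl | hk
  · by_cases hkn : i + 1 ≤ n - 1
    · rw [JM_eq_mul_mul (by omega) hkn]
      exact commute_mul_mul_mul_of_braid (braidSigma_mul_braidSigma_mul_braidSigma hi hkn)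
        (commute_JM_of_commute_braidSigma fun m hm => commute_braidSigma hi hm)
    · rw [braidSigma_of_le (by omega)]
      exact Commute.one_left _
  · have hki := (commute_braidSigma (n := n) hi hk).symm
    exact (hki.mul_right (commute_braidSigma_JM (i := i + 1) (by omega) (by omega))).mul_right hki
termination_by n - i

theorem commute_JM_of_lt {j : ℕ} (hi : 1 ≤ i) (hij : i < j) : Commute (JM n i) (JM n j) :=
  commute_JM_of_commute_braidSigma fun _ hm => (commute_braidSigma_JM hi (by omega)).symm

theorem commute_JM (n i j : ℕ) : Commute (JM n i) (JM n j) := by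
  rw [← JM_max_one n i, ← JM_max_one n j]
  rcases lt_trichotomy (max i 1) (max j 1) with h | h | h
  · exact commute_JM_of_lt (le_max_right _ _) h
  · rw [h]
  · exact (commute_JM_of_lt (le_max_right _ _) h).symm

end JucysMurphy

theorem JM_commute_general (n : ℕ) (i j : ℕ) :
    JM n i * JM n j = JM n j * JM n i :=
  (commute_JM n i j).eq

/-- The Jucys–Murphy elements `δ_1, …, δ_{n-1}` pairwise commute. -/
theorem JM_commute (n : ℕ) (hn : 2 ≤ n) (i j : ℕ)
    (hi : 1 ≤ i) (hi' : i ≤ n - 1) (hj : 1 ≤ j) (hj' : j ≤ n - 1) :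
    JM n i * JM n j = JM n j * JM n i :=
  JM_commute_general n i j
end
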